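/- For the Cuadras-Augé copula C_δ(u,v) = min(u,v)^δ · (uv)^{1−δ} with δ ∈ [0,1], Spearman's rho equals ρ_S(C_δ) = 12·∫₀¹∫₀¹ C_δ(u,v) du dv − 3 = 3δ/(4−δ). -/

import Mathlib

/-! Splitting the inner integral at the diagonal, `C_δ(u, v)` is `v^(1-δ) u` for `u ≤ v` and
`v u^(1-δ)` for `v ≤ u`, so `∫₀¹ C_δ(u, v) du = v^(3-δ)/2 + (v - v^(3-δ))/(2-δ)` and
`∫₀¹∫₀¹ C_δ = 1/(4-δ)`. -/

open Real

open intervalIntegral Set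

noncomputable def cuadrasAuge (δ u v : ℝ) : ℝ := min u v ^ δ * (u * v) ^ (1 - δ)

lemma cuadrasAuge_comm (δ u v : ℝ) : cuadrasAuge δ u v = cuadrasAuge δ v u := by
  rw [cuadrasAuge, cuadrasAuge, min_comm, mul_comm u]

lemma cuadrasAuge_of_le {δ u v : ℝ} (hu : 0 ≤ u) (huv : u ≤ v) :
    cuadrasAuge δ u v = v ^ (1 - δ) * u := by
  rw [cuadrasAuge, min_eq_left huv, mul_rpow hu (hu.trans huv), ← mul_assoc,
    ← rpow_add' hu (by norm_num), add_sub_cancel, rpow_one, mul_comm]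

lemma cuadrasAuge_of_ge {δ u v : ℝ} (hv : 0 ≤ v) (hvu : v ≤ u) :
    cuadrasAuge δ u v = v * u ^ (1 - δ) := by
  rw [cuadrasAuge_comm, cuadrasAuge_of_le hv hvu, mul_comm]

section

variable {δ v : ℝ}

lemma eqOn_cuadrasAuge_zero_self (hv : 0 ≤ v) :
    EqOn (cuadrasAuge δ · v) (fun u ↦ v ^ (1 - δ) * u) (uIcc 0 v) := by
  intro u hu
  rw [uIcc_of_le hv] at hu
  exact cuadrasAuge_of_le hu.1 hu.2

lemma eqOn_cuadrasAuge_self_one (hv : 0 ≤ v) (hv1 : v ≤ 1) :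
    EqOn (cuadrasAuge δ · v) (fun u ↦ v * u ^ (1 - δ)) (uIcc v 1) := by
  intro u hu
  rw [uIcc_of_le hv1] at hu
  exact cuadrasAuge_of_ge hv hu.1

lemma integral_cuadrasAuge_zero_self (hv : 0 ≤ v) (hδ : δ < 2) :
    ∫ u in (0 : ℝ)..v, cuadrasAuge δ u v = v ^ (3 - δ) / 2 := by
  rw [integral_congr (eqOn_cuadrasAuge_zero_self hv), integral_const_mul, integral_id,
    zero_pow two_ne_zero, sub_zero, mul_div_assoc', ← rpow_two, ← rpow_add' hv (by linarith)]
  ring_nf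

lemma integral_cuadrasAuge_self_one (hv : 0 ≤ v) (hv1 : v ≤ 1) (hδ : δ < 2) :
    ∫ u in v..1, cuadrasAuge δ u v = (v - v ^ (3 - δ)) / (2 - δ) := by
  rw [integral_congr (eqOn_cuadrasAuge_self_one hv hv1), integral_const_mul,
    integral_rpow (Or.inl (by linarith)), one_rpow, mul_div_assoc', mul_sub, mul_one,
    ← rpow_one_add' hv (by linarith)]
  ring_nf

lemma integral_cuadrasAuge_zero_one (hv : 0 ≤ v) (hv1 : v ≤ 1) (hδ : δ < 2) :
    ∫ u in (0 : ℝ)..1, cuadrasAuge δ u v = v ^ (3 - δ) / 2 + (v - v ^ (3 - δ)) / (2 - δ) := by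
  have hint₀ : IntervalIntegrable (cuadrasAuge δ · v) MeasureTheory.volume 0 v :=
    ((continuous_const.mul continuous_id).intervalIntegrable 0 v).congr
      ((eqOn_cuadrasAuge_zero_self hv).symm.mono uIoc_subset_uIcc)
  have hint₁ : IntervalIntegrable (cuadrasAuge δ · v) MeasureTheory.volume v 1 :=
    ((intervalIntegrable_rpow' (by linarith)).const_mul v).congr
      ((eqOn_cuadrasAuge_self_one hv hv1).symm.mono uIoc_subset_uIcc)
  rw [← integral_add_adjacent_intervals hint₀ hint₁, integral_cuadrasAuge_zero_self hv hδ,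
    integral_cuadrasAuge_self_one hv hv1 hδ]

lemma integral_integral_cuadrasAuge (hδ : δ < 2) :
    ∫ v in (0 : ℝ)..1, ∫ u in (0 : ℝ)..1, cuadrasAuge δ u v = 1 / (4 - δ) := by
  have hpow : IntervalIntegrable (fun v : ℝ ↦ v ^ (3 - δ)) MeasureTheory.volume 0 1 :=
    intervalIntegrable_rpow' (by linarith)
  have hid : IntervalIntegrable (fun v : ℝ ↦ v) MeasureTheory.volume 0 1 :=
    continuous_id.intervalIntegrable 0 1
  have hinner : EqOn (fun v ↦ ∫ u in (0 : ℝ)..1, cuadrasAuge δ u v)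
      (fun v ↦ v ^ (3 - δ) / 2 + (v - v ^ (3 - δ)) / (2 - δ)) (uIcc 0 1) := fun v hv ↦ by
    rw [uIcc_of_le zero_le_one] at hv
    exact integral_cuadrasAuge_zero_one hv.1 hv.2 hδ
  rw [integral_congr hinner, integral_add (hpow.div_const 2) ((hid.sub hpow).div_const (2 - δ)),
    integral_div, integral_div, integral_sub hid hpow, integral_id,
    integral_rpow (Or.inl (by linarith)), one_rpow, zero_rpow (by linarith),
    show (3 : ℝ) - δ + 1 = 4 - δ by ring]
  have h2 : (2 : ℝ) - δ ≠ 0 := by linarith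
  have h4 : (4 : ℝ) - δ ≠ 0 := by linarith
  field_simp
  ring

end

theorem cuadras_auge_spearman_rho (δ : ℝ) (hδ : δ ∈ Set.Icc (0:ℝ) 1) :
    12 * (∫ v in (0:ℝ)..1, ∫ u in (0:ℝ)..1,
        (min u v) ^ δ * (u * v) ^ (1 - δ)) - 3
      = 3 * δ / (4 - δ) := by
  have hδ2 : δ < 2 := by linarith [hδ.2]
  have h := integral_integral_cuadrasAuge hδ2
  unfold cuadrasAuge at h
  rw [h]
  field_simp [show (4 : ℝ) - δ ≠ 0 by linarith]
  ring
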